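/- δ' m n equals the minimum of the total cost 𝔎(I, γ) taken over all index sets I ⊆ {1, …, m} (determining a realization e' of e) and all alignments γ of e' and f, and this minimum is attained by some pair (I, γ). In particular, no realization of e admits an alignment with f of total cost strictly smaller than δ' m n. -/

import Mathlib

open scoped ENNReal

namespace Stmt1

variable {E F : Type*}

/-- The log projection of a list of moves: first components that are not `none`. -/
def logProj (γ : List (Option E × Option F)) : List E := γ.filterMap Prod.fst

/-- The model projection of a list of moves: second components that are not `none`. -/
def modelProj (γ : List (Option E × Option F)) : List F := γ.filterMap Prod.snd

/-- `γ` is an alignment of `e` and `f`: a list of moves (no `(none, none)` pairs)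
whose log projection is `e` and whose model projection is `f`. -/
def IsAlignment (e : List E) (f : List F) (γ : List (Option E × Option F)) : Prop :=
  (∀ mv ∈ γ, mv ≠ (none, none)) ∧ logProj γ = e ∧ modelProj γ = f

/-- Combined cost of a log move: `θ a` if `P_L a = 0`, else `P_L a * (1 + θ a)`. -/
noncomputable def lg (PL θ : E → ℝ≥0∞) (a : E) : ℝ≥0∞ :=
  if PL a = 0 then θ a else PL a * (1 + θ a)

/-- Combined cost of a synchronous move: `θ a` if `P₌ a b = 0`, else `P₌ a b * (1 + θ a)`. -/
noncomputable def sync (Peq : E → F → ℝ≥0∞) (θ : E → ℝ≥0∞) (a : E) (b : F) : ℝ≥0∞ :=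
  if Peq a b = 0 then θ a else Peq a b * (1 + θ a)

/-- Combined cost of a single move. -/
noncomputable def cMoveCost (PL : E → ℝ≥0∞) (PM : F → ℝ≥0∞) (Peq : E → F → ℝ≥0∞)
    (θ : E → ℝ≥0∞) : Option E × Option F → ℝ≥0∞
  | (some a, none) => lg PL θ a
  | (none, some b) => PM b
  | (some a, some b) => sync Peq θ a b
  | (none, none) => 0

/-- The realization of `e` determined by the index set `I`: the order-preserving
selection of the entries of `e` at the indices in `I`. -/
def select (e : List E) (I : Finset (Fin e.length)) : List E :=
  ((List.finRange e.length).filter (fun i => i ∈ I)).map e.get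

/-- Total cost `𝔎(I, γ)`: sum of the combined move costs of the moves of `γ` plus the
removal cost of the realization, i.e. the sum of `κ_u e_i` over non-selected indices. -/
noncomputable def totalCost (PL : E → ℝ≥0∞) (PM : F → ℝ≥0∞) (Peq : E → F → ℝ≥0∞)
    (θ κu : E → ℝ≥0∞) (e : List E) (I : Finset (Fin e.length))
    (γ : List (Option E × Option F)) : ℝ≥0∞ :=
  (γ.map (cMoveCost PL PM Peq θ)).sum + ∑ i ∈ Iᶜ, κu (e.get i)

/-! Interleaving the moves of an alignment `γ` of a realization `I` with removal steps for the
events outside `I` gives an edit script for `e` and `f`, and every edit script arises this way;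
the cost of the script is `𝔎(I, γ)`. So it suffices to show that `δ' i j` is the least cost of an
edit script for the first `i` events and the first `j` firings. Sorting the scripts by their
last step (the first step of the reversed script) splits this set of costs into the four
translates that appear in the recurrence, and the least element of a union of translates is the
minimum of the translated least elements. -/

theorem reverse_take_add_one {α : Type*} {l : List α} {i : ℕ} (hi : i < l.length) :
    (l.take (i + 1)).reverse = l[i] :: (l.take i).reverse := by
  rw [List.take_add_one, List.getElem?_eq_getElem hi]
  simp

/-- A `drop` step removes an uncertain event from the trace; the other steps are the moves of an
alignment. -/
inductive EditStep (E F : Type*) where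
  | synchronous : E → F → EditStep E F
  | log : E → EditStep E F
  | drop : E → EditStep E F
  | model : F → EditStep E F

namespace EditStep

@[simp]
def event : EditStep E F → Option E
  | synchronous a _ | log a | drop a => some a
  | model _ => none

@[simp]
def firing : EditStep E F → Option F
  | synchronous _ b | model b => some b
  | log _ | drop _ => none

@[simp]
def tag : EditStep E F → Option (E × Bool)
  | synchronous a _ | log a => some (a, true)
  | drop a => some (a, false)
  | model _ => none

@[simp]
def move : EditStep E F → Option (Option E × Option F)
  | synchronous a b => some (some a, some b)
  | log a => some (some a, none)
  | drop _ => none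
  | model b => some (none, some b)

@[simp]
noncomputable def cost (PL : E → ℝ≥0∞) (PM : F → ℝ≥0∞) (Peq : E → F → ℝ≥0∞)
    (θ κu : E → ℝ≥0∞) : EditStep E F → ℝ≥0∞
  | synchronous a b => sync Peq θ a b
  | log a => lg PL θ a
  | drop a => κu a
  | model b => PM b

end EditStep

open EditStep

section Realizations

variable (κu : E → ℝ≥0∞)

def kept (c : List (E × Bool)) : List E := (c.filter (·.2)).map (·.1)

noncomputable def removalCost (c : List (E × Bool)) : ℝ≥0∞ :=
  (c.map fun z => if z.2 then 0 else κu z.1).sum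

def markSelected (e : List E) (I : Finset (Fin e.length)) : List (E × Bool) :=
  (List.finRange e.length).map fun i => (e.get i, decide (i ∈ I))

theorem map_fst_markSelected (e : List E) (I : Finset (Fin e.length)) :
    (markSelected e I).map Prod.fst = e := by
  rw [markSelected, List.map_map]
  exact List.map_get_finRange e

theorem kept_markSelected (e : List E) (I : Finset (Fin e.length)) :
    kept (markSelected e I) = select e I := by
  simp [kept, markSelected, select, List.filter_map, Function.comp_def]

theorem removalCost_markSelected (e : List E) (I : Finset (Fin e.length)) :
    removalCost κu (markSelected e I) = ∑ i ∈ Iᶜ, κu (e.get i) := by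
  calc removalCost κu (markSelected e I)
      = ∑ i, if i ∈ Iᶜ then κu (e.get i) else 0 := by
        simp [removalCost, markSelected, Fin.sum_univ_def, Function.comp_def, ite_not]
    _ = ∑ i ∈ Iᶜ, κu (e.get i) := by rw [Finset.sum_ite_mem, Finset.univ_inter]

theorem exists_markSelected_eq (e : List E) (c : List (E × Bool)) (h : c.map Prod.fst = e) :
    ∃ I, markSelected e I = c := by
  subst h
  refine ⟨Finset.univ.filter fun i => (c.get (Fin.cast (by simp) i)).2,
    List.ext_getElem (by simp [markSelected]) ?_⟩
  intro k _ _
  simp [markSelected]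

theorem map_fst_filterMap_tag (p : List (EditStep E F)) :
    (p.filterMap tag).map Prod.fst = p.filterMap event := by
  induction p with
  | nil => rfl
  | cons s p ih => cases s <;> simp [List.filterMap_cons, ih]

theorem kept_filterMap_tag (p : List (EditStep E F)) :
    kept (p.filterMap tag) = logProj (p.filterMap move) := by
  induction p with
  | nil => rfl
  | cons s p ih => cases s <;> simp_all [List.filterMap_cons, kept, logProj]

theorem modelProj_filterMap_move (p : List (EditStep E F)) :
    modelProj (p.filterMap move) = p.filterMap firing := by
  induction p with
  | nil => rfl
  | cons s p ih => cases s <;> simp_all [List.filterMap_cons, modelProj]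

theorem ne_none_none_of_mem_filterMap_move {p : List (EditStep E F)}
    {mv : Option E × Option F} (h : mv ∈ p.filterMap move) : mv ≠ (none, none) := by
  obtain ⟨s, -, hs⟩ := List.mem_filterMap.mp h
  cases s <;> simp at hs <;> simp [← hs]

theorem exists_filterMap_tag_move_eq (c : List (E × Bool)) (γ : List (Option E × Option F))
    (hγ : ∀ mv ∈ γ, mv ≠ (none, none)) (h : logProj γ = kept c) :
    ∃ p : List (EditStep E F), p.filterMap tag = c ∧ p.filterMap move = γ := by
  induction c generalizing γ with
  | nil =>
    induction γ with
    | nil => exact ⟨[], rfl, rfl⟩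
    | cons mv γ ih =>
      obtain ⟨_ | a, _ | b⟩ := mv
      · exact absurd rfl (hγ _ List.mem_cons_self)
      · obtain ⟨p, hc, hm⟩ :=
          ih (fun mv h => hγ mv (List.mem_cons_of_mem _ h)) (by simpa [logProj] using h)
        exact ⟨model b :: p, by simp only [List.filterMap_cons, tag, hc], by simp [hm]⟩
      all_goals simp [logProj, kept] at h
  | cons z c ihc =>
    obtain ⟨a, _ | _⟩ := z
    · obtain ⟨p, hc, hm⟩ := ihc γ hγ (by simpa [kept] using h)
      exact ⟨drop a :: p, by simp [hc], by simp [List.filterMap_cons, hm]⟩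
    induction γ with
    | nil => simp [logProj, kept] at h
    | cons mv γ ih =>
      have hγ' : ∀ mv ∈ γ, mv ≠ (none, none) := fun mv h => hγ mv (List.mem_cons_of_mem _ h)
      obtain ⟨_ | a', _ | b⟩ := mv
      · exact absurd rfl (hγ _ List.mem_cons_self)
      · obtain ⟨p, hc, hm⟩ := ih hγ' (by simpa [logProj] using h)
        exact ⟨model b :: p, by simp only [List.filterMap_cons, tag, hc], by simp [hm]⟩
      · obtain ⟨rfl, hlog⟩ : a' = a ∧ logProj γ = kept c := by
          simpa [logProj, kept] using h
        obtain ⟨p, hc, hm⟩ := ihc γ hγ' hlog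
        exact ⟨log a' :: p, by simp [hc], by simp [hm]⟩
      · obtain ⟨rfl, hlog⟩ : a' = a ∧ logProj γ = kept c := by
          simpa [logProj, kept] using h
        obtain ⟨p, hc, hm⟩ := ihc γ hγ' hlog
        exact ⟨synchronous a' b :: p, by simp [hc], by simp [hm]⟩

end Realizations

section Scripts

variable (PL : E → ℝ≥0∞) (PM : F → ℝ≥0∞) (Peq : E → F → ℝ≥0∞) (θ κu : E → ℝ≥0∞)

noncomputable def scriptCost (p : List (EditStep E F)) : ℝ≥0∞ :=
  (p.map (cost PL PM Peq θ κu)).sum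

def scriptCosts (x : List E) (y : List F) : Set ℝ≥0∞ :=
  {t | ∃ p : List (EditStep E F), p.filterMap event = x ∧ p.filterMap firing = y ∧
    scriptCost PL PM Peq θ κu p = t}

theorem scriptCosts_reverse (x : List E) (y : List F) :
    scriptCosts PL PM Peq θ κu x.reverse y.reverse = scriptCosts PL PM Peq θ κu x y := by
  have reverse_mem {x : List E} {y : List F} {t : ℝ≥0∞}
      (ht : t ∈ scriptCosts PL PM Peq θ κu x y) :
      t ∈ scriptCosts PL PM Peq θ κu x.reverse y.reverse := by
    obtain ⟨p, rfl, rfl, rfl⟩ := ht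
    exact ⟨p.reverse, List.filterMap_reverse, List.filterMap_reverse,
      by simp [scriptCost, List.map_reverse]⟩
  ext t
  exact ⟨fun ht => by simpa using reverse_mem ht, reverse_mem⟩

theorem scriptCosts_nil_nil : scriptCosts PL PM Peq θ κu [] [] = {0} := by
  ext t
  constructor
  · rintro ⟨_ | ⟨_ | _ | _ | _, p⟩, hx, hy, rfl⟩ <;> simp_all [scriptCost]
  · rintro rfl
    exact ⟨[], rfl, rfl, rfl⟩

theorem scriptCosts_cons_nil (a : E) (x : List E) :
    scriptCosts PL PM Peq θ κu (a :: x) [] =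
      (lg PL θ a + ·) '' scriptCosts PL PM Peq θ κu x [] ∪
        (κu a + ·) '' scriptCosts PL PM Peq θ κu x [] := by
  ext t
  constructor
  · rintro ⟨_ | ⟨_ | _ | _ | _, p⟩, hx, hy, rfl⟩ <;>
      simp only [List.filterMap_nil, List.filterMap_cons, event, firing, List.cons.injEq,
        reduceCtorEq] at hx hy
    · obtain ⟨rfl, rfl⟩ := hx
      exact Or.inl ⟨_, ⟨p, rfl, hy, rfl⟩, by simp [scriptCost]⟩
    · obtain ⟨rfl, rfl⟩ := hx
      exact Or.inr ⟨_, ⟨p, rfl, hy, rfl⟩, by simp [scriptCost]⟩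
  · rintro (⟨_, ⟨p, rfl, hy, rfl⟩, rfl⟩ | ⟨_, ⟨p, rfl, hy, rfl⟩, rfl⟩)
    · exact ⟨log a :: p, by simp, by simpa only [List.filterMap_cons, firing],
        by simp [scriptCost]⟩
    · exact ⟨drop a :: p, by simp, by simpa only [List.filterMap_cons, firing],
        by simp [scriptCost]⟩

theorem scriptCosts_nil_cons (b : F) (y : List F) :
    scriptCosts PL PM Peq θ κu [] (b :: y) =
      (PM b + ·) '' scriptCosts PL PM Peq θ κu [] y := by
  ext t
  constructor
  · rintro ⟨_ | ⟨_ | _ | _ | _, p⟩, hx, hy, rfl⟩ <;>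
      simp only [List.filterMap_nil, List.filterMap_cons, event, firing, List.cons.injEq,
        reduceCtorEq] at hx hy
    obtain ⟨rfl, rfl⟩ := hy
    exact ⟨_, ⟨p, hx, rfl, rfl⟩, by simp [scriptCost]⟩
  · rintro ⟨_, ⟨p, hx, rfl, rfl⟩, rfl⟩
    exact ⟨model b :: p, by simpa only [List.filterMap_cons, event], by simp,
        by simp [scriptCost]⟩

theorem scriptCosts_cons_cons (a : E) (x : List E) (b : F) (y : List F) :
    scriptCosts PL PM Peq θ κu (a :: x) (b :: y) =
      (sync Peq θ a b + ·) '' scriptCosts PL PM Peq θ κu x y ∪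
        ((lg PL θ a + ·) '' scriptCosts PL PM Peq θ κu x (b :: y) ∪
          ((κu a + ·) '' scriptCosts PL PM Peq θ κu x (b :: y) ∪
            (PM b + ·) '' scriptCosts PL PM Peq θ κu (a :: x) y)) := by
  ext t
  constructor
  · rintro ⟨_ | ⟨_ | _ | _ | _, p⟩, hx, hy, rfl⟩ <;>
      simp only [List.filterMap_nil, List.filterMap_cons, event, firing, List.cons.injEq,
        reduceCtorEq] at hx hy
    · obtain ⟨⟨rfl, rfl⟩, ⟨rfl, rfl⟩⟩ := And.intro hx hy
      exact Or.inl ⟨_, ⟨p, rfl, rfl, rfl⟩, by simp [scriptCost]⟩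
    · obtain ⟨rfl, rfl⟩ := hx
      exact Or.inr <| Or.inl ⟨_, ⟨p, rfl, hy, rfl⟩, by simp [scriptCost]⟩
    · obtain ⟨rfl, rfl⟩ := hx
      exact Or.inr <| Or.inr <| Or.inl ⟨_, ⟨p, rfl, hy, rfl⟩, by simp [scriptCost]⟩
    · obtain ⟨rfl, rfl⟩ := hy
      exact Or.inr <| Or.inr <| Or.inr ⟨_, ⟨p, hx, rfl, rfl⟩, by simp [scriptCost]⟩
  · rintro (⟨_, ⟨p, rfl, rfl, rfl⟩, rfl⟩ | ⟨_, ⟨p, rfl, hy, rfl⟩, rfl⟩ |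
      ⟨_, ⟨p, rfl, hy, rfl⟩, rfl⟩ | ⟨_, ⟨p, hx, rfl, rfl⟩, rfl⟩)
    · exact ⟨synchronous a b :: p, by simp, by simp, by simp [scriptCost]⟩
    · exact ⟨log a :: p, by simp, by simpa only [List.filterMap_cons, firing],
        by simp [scriptCost]⟩
    · exact ⟨drop a :: p, by simp, by simpa only [List.filterMap_cons, firing],
        by simp [scriptCost]⟩
    · exact ⟨model b :: p, by simpa only [List.filterMap_cons, event], by simp,
        by simp [scriptCost]⟩

theorem isLeast_scriptCosts_reverse_take (e : List E) (f : List F) (δ' : ℕ → ℕ → ℝ≥0∞)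
    (h00 : δ' 0 0 = 0)
    (hi0 : ∀ i (hi : i < e.length),
      δ' (i + 1) 0 = min (lg PL θ (e[i]'hi)) (κu (e[i]'hi)) + δ' i 0)
    (h0j : ∀ j (hj : j < f.length), δ' 0 (j + 1) = PM (f[j]'hj) + δ' 0 j)
    (hij : ∀ i j (hi : i < e.length) (hj : j < f.length),
      δ' (i + 1) (j + 1) =
        min (sync Peq θ (e[i]'hi) (f[j]'hj) + δ' i j)
          (min (lg PL θ (e[i]'hi) + δ' i (j + 1))
            (min (κu (e[i]'hi) + δ' i (j + 1)) (PM (f[j]'hj) + δ' (i + 1) j)))) :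
    ∀ i ≤ e.length, ∀ j ≤ f.length,
      IsLeast (scriptCosts PL PM Peq θ κu (e.take i).reverse (f.take j).reverse) (δ' i j) := by
  have add_left {s : Set ℝ≥0∞} {u : ℝ≥0∞} (c : ℝ≥0∞) (h : IsLeast s u) :
      IsLeast ((c + ·) '' s) (c + u) :=
    (monotone_id.const_add c).map_isLeast h
  intro i
  induction i with
  | zero =>
    intro _ j
    induction j with
    | zero =>
      intro _
      simp [h00, scriptCosts_nil_nil, isLeast_singleton]
    | succ j ihj =>
      intro (hj : j < f.length)
      rw [reverse_take_add_one hj, List.take_zero, List.reverse_nil, scriptCosts_nil_cons,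
        h0j j hj]
      exact add_left _ (by simpa using ihj hj.le)
  | succ i ihi =>
    intro (hi : i < e.length) j
    induction j with
    | zero =>
      intro _
      rw [reverse_take_add_one hi, List.take_zero, List.reverse_nil, scriptCosts_cons_nil,
        hi0 i hi, ← min_add_add_right]
      exact (add_left _ (by simpa using ihi hi.le 0 (Nat.zero_le _))).union
        (add_left _ (by simpa using ihi hi.le 0 (Nat.zero_le _)))
    | succ j ihj =>
      intro (hj : j < f.length)
      rw [reverse_take_add_one hi, reverse_take_add_one hj, scriptCosts_cons_cons, hij i j hi hj]
      refine (add_left _ (ihi hi.le j hj.le)).union ((add_left _ ?_).union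
        ((add_left _ ?_).union (add_left _ ?_)))
      · simpa only [reverse_take_add_one hj] using ihi hi.le (j + 1) hj
      · simpa only [reverse_take_add_one hj] using ihi hi.le (j + 1) hj
      · simpa only [reverse_take_add_one hi] using ihj hj.le

theorem scriptCost_eq (p : List (EditStep E F)) :
    scriptCost PL PM Peq θ κu p =
      ((p.filterMap move).map (cMoveCost PL PM Peq θ)).sum +
        removalCost κu (p.filterMap tag) := by
  induction p with
  | nil => simp [scriptCost, removalCost]
  | cons s p ih =>
    cases s <;> simp only [scriptCost, removalCost] at ih ⊢ <;>
      simp [List.filterMap_cons, cMoveCost, ih, add_assoc, add_left_comm]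

theorem scriptCosts_eq_setOf_totalCost (e : List E) (f : List F) :
    scriptCosts PL PM Peq θ κu e f =
      {t | ∃ I γ, IsAlignment (select e I) f γ ∧ totalCost PL PM Peq θ κu e I γ = t} := by
  ext t
  constructor
  · rintro ⟨p, he, rfl, rfl⟩
    obtain ⟨I, hI⟩ :=
      exists_markSelected_eq e (p.filterMap tag) ((map_fst_filterMap_tag p).trans he)
    refine ⟨I, p.filterMap move,
      ⟨fun _ => ne_none_none_of_mem_filterMap_move, ?_, modelProj_filterMap_move p⟩, ?_⟩
    · rw [← kept_markSelected, hI, kept_filterMap_tag]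
    · rw [totalCost, ← removalCost_markSelected, hI, scriptCost_eq]
  · rintro ⟨I, γ, ⟨hγ, hlog, rfl⟩, rfl⟩
    obtain ⟨p, hc, rfl⟩ := exists_filterMap_tag_move_eq (markSelected e I) γ hγ
      (hlog.trans (kept_markSelected e I).symm)
    refine ⟨p, ?_, (modelProj_filterMap_move p).symm, ?_⟩
    · rw [← map_fst_filterMap_tag, hc, map_fst_markSelected]
    · rw [scriptCost_eq, hc, removalCost_markSelected, totalCost]

end Scripts

/-- `δ' m n` (defined by the recurrence) equals the minimum of the total cost `𝔎(I, γ)`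
over all index sets `I` (determining a realization of `e`) and all alignments `γ` of the
realization with `f`; the minimum is attained by some pair `(I, γ)`, and no realization of
`e` admits an alignment with `f` of total cost strictly smaller than `δ' m n`. -/
theorem delta'_min_total_cost
    (PL : E → ℝ≥0∞) (PM : F → ℝ≥0∞) (Peq : E → F → ℝ≥0∞) (θ κu : E → ℝ≥0∞)
    (e : List E) (f : List F)
    (δ' : ℕ → ℕ → ℝ≥0∞)
    (h00 : δ' 0 0 = 0)
    (hi0 : ∀ i (hi : i < e.length),
      δ' (i + 1) 0 = min (lg PL θ (e[i]'hi)) (κu (e[i]'hi)) + δ' i 0)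
    (h0j : ∀ j (hj : j < f.length), δ' 0 (j + 1) = PM (f[j]'hj) + δ' 0 j)
    (hij : ∀ i j (hi : i < e.length) (hj : j < f.length),
      δ' (i + 1) (j + 1) =
        min (sync Peq θ (e[i]'hi) (f[j]'hj) + δ' i j)
          (min (lg PL θ (e[i]'hi) + δ' i (j + 1))
            (min (κu (e[i]'hi) + δ' i (j + 1)) (PM (f[j]'hj) + δ' (i + 1) j)))) :
    (∃ (I : Finset (Fin e.length)) (γ : List (Option E × Option F)),
      IsAlignment (select e I) f γ ∧
        totalCost PL PM Peq θ κu e I γ = δ' e.length f.length) ∧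
    (∀ (I : Finset (Fin e.length)) (γ : List (Option E × Option F)),
      IsAlignment (select e I) f γ →
        δ' e.length f.length ≤ totalCost PL PM Peq θ κu e I γ) := by
  have h := isLeast_scriptCosts_reverse_take PL PM Peq θ κu e f δ' h00 hi0 h0j hij
    e.length le_rfl f.length le_rfl
  rw [List.take_length, List.take_length, scriptCosts_reverse,
    scriptCosts_eq_setOf_totalCost] at h
  exact ⟨h.1, fun I γ hγ => h.2 ⟨I, γ, hγ, rfl⟩⟩

end Stmt1
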